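/- arXiv:2206.07178 — 7 statements merged into one kernel-verified Lean document; each statement's English description precedes it below -/
import Mathlib

section
/- The Hamacher operations are monotone in the parameter φ: for fixed real numbers a, b with 0 ≤ a ≤ 1 and 0 ≤ b ≤ 1, the function φ ↦ T_φ(a,b) is antitone on (0,∞) (if 0 < φ ≤ φ' then T_{φ'}(a,b) ≤ T_φ(a,b)), and the function φ ↦ S_φ(a,b) is monotone on (0,∞) (if 0 < φ ≤ φ' then S_φ(a,b) ≤ S_{φ'}(a,b)). -/
/-- Hamacher sum (Hamacher t-conorm) with parameter `φ`. -/
noncomputable def hamacherSum (φ a b : ℝ) : ℝ :=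
  (a + b - a * b - (1 - φ) * a * b) / (1 - (1 - φ) * a * b)

/-- Hamacher product (Hamacher t-norm) with parameter `φ`. -/
noncomputable def hamacherProd (φ a b : ℝ) : ℝ :=
  a * b / (φ + (1 - φ) * (a + b - a * b))

/-!
With `p = (1 - a)(1 - b) ∈ [0, 1]`, the denominator of `T_φ(a, b)` is `(1 - p) + φ p`, which
is positive and grows with `φ`, while the numerator `ab ≥ 0` does not depend on `φ`;
so `T_φ(a, b)` decreases.
The Hamacher sum is the De Morgan dual `S_φ(a, b) = 1 - T_φ(1 - a, 1 - b)`, hence it increases.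
-/

lemma hamacherProd_denom_eq (φ a b : ℝ) :
    φ + (1 - φ) * (a + b - a * b) = (1 - (1 - a) * (1 - b)) + φ * ((1 - a) * (1 - b)) := by
  ring

lemma hamacherSum_denom_eq_hamacherProd_denom (φ a b : ℝ) :
    1 - (1 - φ) * a * b = φ + (1 - φ) * ((1 - a) + (1 - b) - (1 - a) * (1 - b)) := by
  ring

lemma hamacherProd_denom_pos {φ a b : ℝ} (hφ : 0 < φ) (ha : 0 ≤ a) (ha1 : a ≤ 1) (hb : 0 ≤ b)
    (hb1 : b ≤ 1) :
    0 < φ + (1 - φ) * (a + b - a * b) := by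
  have hp : 0 ≤ (1 - a) * (1 - b) := mul_nonneg (sub_nonneg.2 ha1) (sub_nonneg.2 hb1)
  have hp1 : (1 - a) * (1 - b) ≤ 1 := mul_le_one₀ (by linarith) (sub_nonneg.2 hb1) (by linarith)
  rw [hamacherProd_denom_eq]
  nlinarith [mul_nonneg hφ.le hp]

theorem hamacherSum_eq_one_sub_hamacherProd {φ a b : ℝ} (h : 1 - (1 - φ) * a * b ≠ 0) :
    hamacherSum φ a b = 1 - hamacherProd φ (1 - a) (1 - b) := by
  rw [hamacherSum, hamacherProd, ← hamacherSum_denom_eq_hamacherProd_denom, eq_sub_iff_add_eq,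
    ← add_div, div_eq_one_iff_eq h]
  ring

theorem hamacherProd_antitoneOn {a b : ℝ} (ha : 0 ≤ a) (ha1 : a ≤ 1) (hb : 0 ≤ b) (hb1 : b ≤ 1) :
    AntitoneOn (fun φ ↦ hamacherProd φ a b) (Set.Ioi 0) := by
  intro φ hφ φ' _ hle
  refine div_le_div_of_nonneg_left (mul_nonneg ha hb) (hamacherProd_denom_pos hφ ha ha1 hb hb1) ?_
  rw [hamacherProd_denom_eq, hamacherProd_denom_eq]
  gcongr

theorem hamacherSum_monotoneOn {a b : ℝ} (ha : 0 ≤ a) (ha1 : a ≤ 1) (hb : 0 ≤ b) (hb1 : b ≤ 1) :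
    MonotoneOn (fun φ ↦ hamacherSum φ a b) (Set.Ioi 0) := by
  have ha' : 0 ≤ 1 - a := sub_nonneg.2 ha1
  have hb' : 0 ≤ 1 - b := sub_nonneg.2 hb1
  have hdual : ∀ φ ∈ Set.Ioi (0 : ℝ), hamacherSum φ a b = 1 - hamacherProd φ (1 - a) (1 - b) :=
    fun φ hφ ↦ hamacherSum_eq_one_sub_hamacherProd <| by
      rw [hamacherSum_denom_eq_hamacherProd_denom]
      exact (hamacherProd_denom_pos hφ ha' (by linarith) hb' (by linarith)).ne'
  intro φ hφ φ' hφ' hle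
  simp only [hdual φ hφ, hdual φ' hφ']
  linarith [hamacherProd_antitoneOn ha' (by linarith) hb' (by linarith) hφ hφ' hle]

theorem hamacher_monotone_in_parameter (a b : ℝ)
    (ha : 0 ≤ a) (ha1 : a ≤ 1) (hb : 0 ≤ b) (hb1 : b ≤ 1) :
    ∀ φ φ' : ℝ, 0 < φ → φ ≤ φ' →
      hamacherProd φ' a b ≤ hamacherProd φ a b ∧
      hamacherSum φ a b ≤ hamacherSum φ' a b := by
  intro φ φ' hφ hle
  have hφ' : φ' ∈ Set.Ioi 0 := hφ.trans_le hle
  exact ⟨hamacherProd_antitoneOn ha ha1 hb hb1 hφ hφ' hle,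
    hamacherSum_monotoneOn ha ha1 hb hb1 hφ hφ' hle⟩
end

section
/- The Hamacher addition of interval valued q-rung orthopair fuzzy numbers preserves the q-rung constraint: for every real parameter φ > 0, real q ≥ 1, and real numbers u₁, u₂, v₁, v₂ ∈ [0,1] satisfying u₁^q + v₁^q ≤ 1 and u₂^q + v₂^q ≤ 1, one has S_φ(u₁^q, u₂^q) + T_φ(v₁^q, v₂^q) ≤ 1, i.e., the membership and non-membership components produced by the interval valued q-rung orthopair fuzzy Hamacher sum again satisfy the condition that the sum of their q-th powers is at most 1. -/
open Set

section Hamacher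

variable {φ : ℝ}

lemma hamacherProd_comm (φ x y : ℝ) : hamacherProd φ x y = hamacherProd φ y x := by
  unfold hamacherProd
  ring_nf

/-- `φ + (1 - φ) s` with `s = x + y - xy ∈ [0, 1]` is a convex combination of `φ > 0` and `1`. -/
lemma hamacherProd_denom_pos_s7 (hφ : 0 < φ) {x y : ℝ} (hx : x ∈ Icc (0 : ℝ) 1)
    (hy : y ∈ Icc (0 : ℝ) 1) : 0 < φ + (1 - φ) * (x + y - x * y) := by
  have hs₀ : 0 ≤ x + y - x * y := by nlinarith [hx.1, hx.2, hy.1]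
  have hs₁ : x + y - x * y ≤ 1 := by nlinarith [hx.2, hy.2]
  rcases le_total φ 1 with hφ₁ | hφ₁
  · nlinarith [mul_nonneg (sub_nonneg.2 hφ₁) hs₀]
  · nlinarith [mul_nonneg (sub_nonneg.2 hφ₁) (sub_nonneg.2 hs₁)]

lemma hamacherProd_mono_left (hφ : 0 < φ) {x x' y : ℝ} (hx : x ∈ Icc (0 : ℝ) 1)
    (hx' : x' ∈ Icc (0 : ℝ) 1) (hy : y ∈ Icc (0 : ℝ) 1) (hxx' : x ≤ x') :
    hamacherProd φ x y ≤ hamacherProd φ x' y := by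
  unfold hamacherProd
  rw [div_le_div_iff₀ (hamacherProd_denom_pos_s7 hφ hx hy) (hamacherProd_denom_pos_s7 hφ hx' hy)]
  have hslope : 0 ≤ φ + (1 - φ) * y := by nlinarith [hy.1, hy.2]
  -- the difference of the cross products factors as `y (x' - x) (φ + (1 - φ) y)`
  nlinarith [mul_nonneg (mul_nonneg hy.1 (sub_nonneg.2 hxx')) hslope]

lemma hamacherProd_mono (hφ : 0 < φ) {x x' y y' : ℝ} (hx : x ∈ Icc (0 : ℝ) 1)
    (hx' : x' ∈ Icc (0 : ℝ) 1) (hy : y ∈ Icc (0 : ℝ) 1) (hy' : y' ∈ Icc (0 : ℝ) 1)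
    (hxx' : x ≤ x') (hyy' : y ≤ y') :
    hamacherProd φ x y ≤ hamacherProd φ x' y' :=
  calc hamacherProd φ x y ≤ hamacherProd φ x' y := hamacherProd_mono_left hφ hx hx' hy hxx'
    _ = hamacherProd φ y x' := hamacherProd_comm φ x' y
    _ ≤ hamacherProd φ y' x' := hamacherProd_mono_left hφ hy hy' hx' hyy'
    _ = hamacherProd φ x' y' := hamacherProd_comm φ y' x'

lemma hamacherSum_add_hamacherProd_one_sub (hφ : 0 < φ) {a b : ℝ} (ha : a ∈ Icc (0 : ℝ) 1)
    (hb : b ∈ Icc (0 : ℝ) 1) : hamacherSum φ a b + hamacherProd φ (1 - a) (1 - b) = 1 := by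
  have hden : φ + (1 - φ) * ((1 - a) + (1 - b) - (1 - a) * (1 - b)) = 1 - (1 - φ) * a * b := by
    ring
  have hpos := hamacherProd_denom_pos_s7 hφ (Icc.one_sub_mem ha) (Icc.one_sub_mem hb)
  rw [hden] at hpos
  unfold hamacherSum hamacherProd
  rw [hden, ← add_div, div_eq_one_iff_eq hpos.ne']
  ring

lemma hamacherSum_add_hamacherProd_le_one (hφ : 0 < φ) {a b c d : ℝ}
    (ha : a ∈ Icc (0 : ℝ) 1) (hb : b ∈ Icc (0 : ℝ) 1) (hc : 0 ≤ c) (hd : 0 ≤ d)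
    (hca : c ≤ 1 - a) (hdb : d ≤ 1 - b) :
    hamacherSum φ a b + hamacherProd φ c d ≤ 1 := by
  have hc' : c ∈ Icc (0 : ℝ) 1 := ⟨hc, by linarith [ha.1]⟩
  have hd' : d ∈ Icc (0 : ℝ) 1 := ⟨hd, by linarith [hb.1]⟩
  calc hamacherSum φ a b + hamacherProd φ c d
      ≤ hamacherSum φ a b + hamacherProd φ (1 - a) (1 - b) := by
        gcongr 1
        exact hamacherProd_mono hφ hc' (Icc.one_sub_mem ha) hd' (Icc.one_sub_mem hb) hca hdb
    _ = 1 := hamacherSum_add_hamacherProd_one_sub hφ ha hb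

end Hamacher

lemma rpow_mem_Icc_zero_one {x q : ℝ} (hx : x ∈ Icc (0 : ℝ) 1) (hq : 0 ≤ q) :
    x ^ q ∈ Icc (0 : ℝ) 1 :=
  ⟨Real.rpow_nonneg hx.1 q, Real.rpow_le_one hx.1 hx.2 hq⟩

theorem hamacher_addition_preserves_qrung (φ q u₁ u₂ v₁ v₂ : ℝ) (hφ : 0 < φ) (hq : 1 ≤ q)
    (hu₁ : u₁ ∈ Set.Icc (0:ℝ) 1) (hu₂ : u₂ ∈ Set.Icc (0:ℝ) 1)
    (hv₁ : v₁ ∈ Set.Icc (0:ℝ) 1) (hv₂ : v₂ ∈ Set.Icc (0:ℝ) 1)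
    (h₁ : u₁ ^ q + v₁ ^ q ≤ 1) (h₂ : u₂ ^ q + v₂ ^ q ≤ 1) :
    hamacherSum φ (u₁ ^ q) (u₂ ^ q) + hamacherProd φ (v₁ ^ q) (v₂ ^ q) ≤ 1 := by
  have hq₀ : 0 ≤ q := by linarith
  exact hamacherSum_add_hamacherProd_le_one hφ (rpow_mem_Icc_zero_one hu₁ hq₀)
    (rpow_mem_Icc_zero_one hu₂ hq₀) (Real.rpow_nonneg hv₁.1 q) (Real.rpow_nonneg hv₂.1 q)
    (by linarith) (by linarith)
end

section
/- The Hamacher multiplication of interval valued q-rung orthopair fuzzy numbers preserves the q-rung constraint: for every real parameter φ > 0, real q ≥ 1, and real numbers u₁, u₂, v₁, v₂ ∈ [0,1] satisfying u₁^q + v₁^q ≤ 1 and u₂^q + v₂^q ≤ 1, one has T_φ(u₁^q, u₂^q) + S_φ(v₁^q, v₂^q) ≤ 1, i.e., the membership and non-membership components produced by the interval valued q-rung orthopair fuzzy Hamacher product again satisfy the condition that the sum of their q-th powers is at most 1. -/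
lemma hamacherD_pos (φ x y : ℝ) (hφ : 0 < φ) (hx : 0 ≤ x) (hx1 : x ≤ 1)
    (hy : 0 ≤ y) (hy1 : y ≤ 1) : 0 < φ + (1 - φ) * (x + y - x * y) := by
  have hs0 : 0 ≤ x + y - x * y := by nlinarith
  have hs1 : x + y - x * y ≤ 1 := by nlinarith
  rcases le_total φ 1 with h | h
  · nlinarith [mul_nonneg (by linarith : (0:ℝ) ≤ 1 - φ) hs0]
  · nlinarith [mul_nonneg (by linarith : (0:ℝ) ≤ φ - 1) (by linarith : 0 ≤ 1 - (x + y - x * y))]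

lemma hamacher_mono (φ x x' y : ℝ) (hφ : 0 < φ) (hx : 0 ≤ x) (hx' : x ≤ x')
    (hx1 : x' ≤ 1) (hy : 0 ≤ y) (hy1 : y ≤ 1) :
    x * y / (φ + (1 - φ) * (x + y - x * y)) ≤ x' * y / (φ + (1 - φ) * (x' + y - x' * y)) := by
  rw [div_le_div_iff₀ (hamacherD_pos φ x y hφ hx (by linarith) hy hy1)
    (hamacherD_pos φ x' y hφ (by linarith) hx1 hy hy1)]
  nlinarith [mul_nonneg (mul_nonneg (by linarith : (0:ℝ) ≤ x' - x) hy)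
      (mul_nonneg hφ.le (by linarith : (0:ℝ) ≤ 1 - y)),
    mul_nonneg (mul_nonneg (by linarith : (0:ℝ) ≤ x' - x) hy) hy]

lemma hamacher_key (φ a b c d : ℝ) (hφ : 0 < φ) (ha : 0 ≤ a) (hb : 0 ≤ b)
    (hc : 0 ≤ c) (hd : 0 ≤ d) (hc1 : c ≤ 1) (hd1 : d ≤ 1)
    (hac : a + c ≤ 1) (hbd : b + d ≤ 1) :
    a * b / (φ + (1 - φ) * (a + b - a * b)) +
      (c + d - c * d - (1 - φ) * c * d) / (1 - (1 - φ) * c * d) ≤ 1 := by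
  have ht0 : 0 ≤ c * d := mul_nonneg hc hd
  have ht1 : c * d ≤ 1 := by nlinarith
  have hD2 : 0 < 1 - (1 - φ) * c * d := by
    rcases le_total φ 1 with h | h
    · nlinarith [mul_nonneg (by linarith : (0:ℝ) ≤ 1 - φ) ht0]
    · nlinarith [mul_nonneg (by linarith : (0:ℝ) ≤ φ - 1) ht0]
  have hS : (c + d - c * d - (1 - φ) * c * d) / (1 - (1 - φ) * c * d)
      = 1 - (1 - c) * (1 - d) / (1 - (1 - φ) * c * d) := by
    rw [eq_sub_iff_add_eq, ← add_div, div_eq_one_iff_eq hD2.ne']; ring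
  rw [hS]
  have m1 := hamacher_mono φ a (1 - c) b hφ ha (by linarith) (by linarith) hb (by linarith)
  have m2 := hamacher_mono φ b (1 - d) (1 - c) hφ hb (by linarith) (by linarith)
      (by linarith) (by linarith)
  have e1 : (1 - c) * b / (φ + (1 - φ) * ((1 - c) + b - (1 - c) * b))
      = b * (1 - c) / (φ + (1 - φ) * (b + (1 - c) - b * (1 - c))) := by ring_nf
  have e2 : (1 - d) * (1 - c) / (φ + (1 - φ) * ((1 - d) + (1 - c) - (1 - d) * (1 - c)))
      = (1 - c) * (1 - d) / (1 - (1 - φ) * c * d) := by ring_nf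
  rw [e1] at m1
  rw [e2] at m2
  linarith

theorem hamacher_multiplication_preserves_qrung (φ q u₁ u₂ v₁ v₂ : ℝ) (hφ : 0 < φ) (hq : 1 ≤ q)
    (hu₁ : u₁ ∈ Set.Icc (0:ℝ) 1) (hu₂ : u₂ ∈ Set.Icc (0:ℝ) 1)
    (hv₁ : v₁ ∈ Set.Icc (0:ℝ) 1) (hv₂ : v₂ ∈ Set.Icc (0:ℝ) 1)
    (h₁ : u₁ ^ q + v₁ ^ q ≤ 1) (h₂ : u₂ ^ q + v₂ ^ q ≤ 1) :
    hamacherProd φ (u₁ ^ q) (u₂ ^ q) + hamacherSum φ (v₁ ^ q) (v₂ ^ q) ≤ 1 := by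
  have hq0 : 0 ≤ q := by linarith
  exact hamacher_key φ (u₁ ^ q) (u₂ ^ q) (v₁ ^ q) (v₂ ^ q) hφ
    (Real.rpow_nonneg hu₁.1 q) (Real.rpow_nonneg hu₂.1 q)
    (Real.rpow_nonneg hv₁.1 q) (Real.rpow_nonneg hv₂.1 q)
    (Real.rpow_le_one hv₁.1 hv₁.2 hq0) (Real.rpow_le_one hv₂.1 hv₂.2 hq0)
    h₁ h₂
end

section
/- For every real parameter φ > 0 and every real exponent ϑ > 0, the Hamacher scalar-multiplication membership function f_{φ,ϑ}(x) = ((1+(φ−1)x)^ϑ − (1−x)^ϑ)/((1+(φ−1)x)^ϑ + (φ−1)(1−x)^ϑ) has positive denominator for x ∈ [0,1], maps [0,1] into [0,1], and is monotone nondecreasing on [0,1]: if 0 ≤ x ≤ x' ≤ 1 then f_{φ,ϑ}(x) ≤ f_{φ,ϑ}(x'). -/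
/-!
With `h t = (1 - t) / (1 + (φ - 1) t)`, dividing numerator and denominator by
`(1 + (φ - 1) x) ^ ϑ` gives `hamacherScalarMem φ ϑ x = h ((h x) ^ ϑ)`. For `φ > 0` the Möbius
map `h` is antitone on `[0, 1]` with `h 0 = 1` and `h 1 = 0`, and `t ↦ t ^ ϑ` is monotone on
`[0, 1]`, so the composite is monotone and maps `[0, 1]` into itself. The denominator is
`(1 + (φ - 1) x) ^ ϑ` times the (positive) denominator of `h` at `(h x) ^ ϑ`.
-/

/-- Hamacher scalar-multiplication membership function with parameters `φ` and `ϑ`. -/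
noncomputable def hamacherScalarMem (φ ϑ x : ℝ) : ℝ :=
  ((1 + (φ - 1) * x) ^ ϑ - (1 - x) ^ ϑ) /
    ((1 + (φ - 1) * x) ^ ϑ + (φ - 1) * (1 - x) ^ ϑ)

open Set

noncomputable def hamacherRatio (φ t : ℝ) : ℝ :=
  (1 - t) / (1 + (φ - 1) * t)

section HamacherRatio

variable {φ t : ℝ}

lemma one_add_sub_one_mul_pos (hφ : 0 < φ) (ht : t ∈ Icc (0 : ℝ) 1) :
    0 < 1 + (φ - 1) * t := by
  obtain ⟨ht0, ht1⟩ := ht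
  nlinarith [mul_nonneg ht0 hφ.le]

lemma antitoneOn_hamacherRatio (hφ : 0 < φ) : AntitoneOn (hamacherRatio φ) (Icc 0 1) := by
  intro s hs t ht hst
  rw [hamacherRatio, hamacherRatio,
    div_le_div_iff₀ (one_add_sub_one_mul_pos hφ ht) (one_add_sub_one_mul_pos hφ hs)]
  nlinarith

lemma hamacherRatio_mem_Icc (hφ : 0 < φ) (ht : t ∈ Icc (0 : ℝ) 1) :
    hamacherRatio φ t ∈ Icc (0 : ℝ) 1 := by
  have h0 : (0 : ℝ) ∈ Icc (0 : ℝ) 1 := left_mem_Icc.2 zero_le_one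
  have h1 : (1 : ℝ) ∈ Icc (0 : ℝ) 1 := right_mem_Icc.2 zero_le_one
  constructor
  · simpa [hamacherRatio] using antitoneOn_hamacherRatio hφ ht h1 ht.2
  · simpa [hamacherRatio] using antitoneOn_hamacherRatio hφ h0 ht ht.1

lemma rpow_hamacherRatio_mem_Icc (hφ : 0 < φ) (ht : t ∈ Icc (0 : ℝ) 1) {ϑ : ℝ} (hϑ : 0 ≤ ϑ) :
    hamacherRatio φ t ^ ϑ ∈ Icc (0 : ℝ) 1 := by
  obtain ⟨h0, h1⟩ := hamacherRatio_mem_Icc hφ ht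
  exact ⟨Real.rpow_nonneg h0 ϑ, Real.rpow_le_one h0 h1 hϑ⟩

lemma one_sub_rpow_eq_mul_rpow_hamacherRatio (hφ : 0 < φ) (ht : t ∈ Icc (0 : ℝ) 1) (ϑ : ℝ) :
    (1 - t) ^ ϑ = (1 + (φ - 1) * t) ^ ϑ * hamacherRatio φ t ^ ϑ := by
  have ha := one_add_sub_one_mul_pos hφ ht
  rw [hamacherRatio, Real.div_rpow (by linarith [ht.2]) ha.le,
    mul_div_cancel₀ _ (Real.rpow_pos_of_pos ha ϑ).ne']

end HamacherRatio

section HamacherScalarMem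

variable {φ ϑ x : ℝ}

lemma hamacherScalarMem_denom_eq (hφ : 0 < φ) (hx : x ∈ Icc (0 : ℝ) 1) :
    (1 + (φ - 1) * x) ^ ϑ + (φ - 1) * (1 - x) ^ ϑ =
      (1 + (φ - 1) * x) ^ ϑ * (1 + (φ - 1) * hamacherRatio φ x ^ ϑ) := by
  rw [one_sub_rpow_eq_mul_rpow_hamacherRatio hφ hx]
  ring

lemma hamacherScalarMem_denom_pos (hφ : 0 < φ) (hϑ : 0 ≤ ϑ) (hx : x ∈ Icc (0 : ℝ) 1) :
    0 < (1 + (φ - 1) * x) ^ ϑ + (φ - 1) * (1 - x) ^ ϑ := by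
  rw [hamacherScalarMem_denom_eq hφ hx]
  exact mul_pos (Real.rpow_pos_of_pos (one_add_sub_one_mul_pos hφ hx) ϑ)
    (one_add_sub_one_mul_pos hφ (rpow_hamacherRatio_mem_Icc hφ hx hϑ))

lemma hamacherScalarMem_eq_hamacherRatio (hφ : 0 < φ) (hx : x ∈ Icc (0 : ℝ) 1) :
    hamacherScalarMem φ ϑ x = hamacherRatio φ (hamacherRatio φ x ^ ϑ) := by
  have hA := Real.rpow_pos_of_pos (one_add_sub_one_mul_pos hφ hx) ϑ
  rw [hamacherScalarMem, hamacherScalarMem_denom_eq hφ hx,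
    one_sub_rpow_eq_mul_rpow_hamacherRatio hφ hx, ← mul_one_sub, mul_div_mul_left _ _ hA.ne']
  rfl

end HamacherScalarMem

theorem hamacherScalarMem_denom_pos_maps_Icc_monotone (φ ϑ : ℝ) (hφ : 0 < φ) (hϑ : 0 < ϑ) :
    (∀ x : ℝ, x ∈ Set.Icc (0:ℝ) 1 →
      0 < (1 + (φ - 1) * x) ^ ϑ + (φ - 1) * (1 - x) ^ ϑ ∧
      hamacherScalarMem φ ϑ x ∈ Set.Icc (0:ℝ) 1) ∧
    (∀ x x' : ℝ, 0 ≤ x → x ≤ x' → x' ≤ 1 →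
      hamacherScalarMem φ ϑ x ≤ hamacherScalarMem φ ϑ x') := by
  refine ⟨fun x hx => ⟨hamacherScalarMem_denom_pos hφ hϑ.le hx, ?_⟩, ?_⟩
  · rw [hamacherScalarMem_eq_hamacherRatio hφ hx]
    exact hamacherRatio_mem_Icc hφ (rpow_hamacherRatio_mem_Icc hφ hx hϑ.le)
  · intro x x' hx0 hxx' hx'1
    have hx : x ∈ Icc (0 : ℝ) 1 := ⟨hx0, hxx'.trans hx'1⟩
    have hx' : x' ∈ Icc (0 : ℝ) 1 := ⟨hx0.trans hxx', hx'1⟩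
    have hratio : hamacherRatio φ x' ^ ϑ ≤ hamacherRatio φ x ^ ϑ :=
      Real.rpow_le_rpow (hamacherRatio_mem_Icc hφ hx').1
        (antitoneOn_hamacherRatio hφ hx hx' hxx') hϑ.le
    rw [hamacherScalarMem_eq_hamacherRatio hφ hx, hamacherScalarMem_eq_hamacherRatio hφ hx']
    exact antitoneOn_hamacherRatio hφ (rpow_hamacherRatio_mem_Icc hφ hx' hϑ.le)
      (rpow_hamacherRatio_mem_Icc hφ hx hϑ.le) hratio
end

section
/- The Hamacher scalar multiplication is compatible with iterated Hamacher addition: for every real parameter φ > 0, every natural number n ≥ 1, and every real x ∈ [0,1], the n-fold Hamacher sum of x with itself, defined recursively by x^{(1)} = x and x^{(k+1)} = S_φ(x^{(k)}, x), equals f_{φ,n}(x) = ((1+(φ−1)x)^n − (1−x)^n)/((1+(φ−1)x)^n + (φ−1)(1−x)^n). -/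
lemma hamacher_step (φ x N D : ℝ) (hDne : D ≠ 0)
    (hD1ne : D - (1 - φ) * N * x ≠ 0) :
    hamacherSum φ (N / D) x =
      (N + x * D - (2 - φ) * N * x) / (D - (1 - φ) * N * x) := by
  rw [hamacherSum]
  rw [div_eq_div_iff _ hD1ne]
  · field_simp
    ring_nf
  · intro hcon
    apply hD1ne
    have : (1 - (1 - φ) * (N / D) * x) * D = D - (1 - φ) * N * x := by
      field_simp
    rw [← this, hcon, zero_mul]

/-- If `h k` is the `k`-fold Hamacher sum of `x` with itself
(`h 1 = x`, `h (k+1) = S_φ (h k) x`), then `h n = f_{φ,n} x` for all `n ≥ 1`. -/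
theorem iterated_hamacherSum_eq_scalarMem (φ x : ℝ) (hφ : 0 < φ)
    (hx : x ∈ Set.Icc (0:ℝ) 1) (h : ℕ → ℝ) (h1 : h 1 = x)
    (hrec : ∀ k : ℕ, 1 ≤ k → h (k + 1) = hamacherSum φ (h k) x) :
    ∀ n : ℕ, 1 ≤ n → h n = hamacherScalarMem φ (n : ℝ) x := by
  obtain ⟨hx0, hx1⟩ := hx
  have hApos : 0 < 1 + (φ - 1) * x := by
    rcases lt_or_eq_of_le hx1 with hlt | heq
    · nlinarith
    · nlinarith
  have hB0 : 0 ≤ 1 - x := by linarith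
  have hBA : 1 - x ≤ 1 + (φ - 1) * x := by nlinarith
  have hD : ∀ m : ℕ, 0 < (1 + (φ - 1) * x) ^ m + (φ - 1) * (1 - x) ^ m := by
    intro m
    have hpow : (1 - x) ^ m ≤ (1 + (φ - 1) * x) ^ m := pow_le_pow_left₀ hB0 hBA m
    have hApow : 0 < (1 + (φ - 1) * x) ^ m := pow_pos hApos m
    have hBpow : 0 ≤ (1 - x) ^ m := pow_nonneg hB0 m
    rcases le_or_gt 1 φ with hp | hp
    · nlinarith
    · nlinarith
  have key : ∀ m : ℕ, 1 ≤ m → h m =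
      ((1 + (φ - 1) * x) ^ m - (1 - x) ^ m) /
        ((1 + (φ - 1) * x) ^ m + (φ - 1) * (1 - x) ^ m) := by
    intro m hm
    induction m with
    | zero => omega
    | succ k ih =>
      rcases Nat.lt_or_ge 1 (k + 1) with hk | hk
      · have hk1 : 1 ≤ k := by omega
        have hDk := hD k
        have hDk1 := hD (k + 1)
        have hEq : ((1 + (φ - 1) * x) ^ k + (φ - 1) * (1 - x) ^ k) -
            (1 - φ) * ((1 + (φ - 1) * x) ^ k - (1 - x) ^ k) * x =
            (1 + (φ - 1) * x) ^ (k + 1) + (φ - 1) * (1 - x) ^ (k + 1) := by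
          rw [pow_succ, pow_succ]; ring
        rw [hrec k hk1, ih hk1,
          hamacher_step φ x _ _ (ne_of_gt hDk) (by rw [hEq]; exact ne_of_gt hDk1), hEq]
        congr 1
        rw [pow_succ, pow_succ]; ring
      · have hk0 : k = 0 := by omega
        subst hk0
        rw [h1, pow_one, pow_one]
        have e1 : 1 + (φ - 1) * x - (1 - x) = φ * x := by ring
        have e2 : 1 + (φ - 1) * x + (φ - 1) * (1 - x) = φ := by ring
        rw [e1, e2, mul_div_cancel_left₀ x hφ.ne']
  intro n hn
  rw [key n hn, hamacherScalarMem, Real.rpow_natCast, Real.rpow_natCast]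
end

section
/- The Hamacher power operation is compatible with iterated Hamacher multiplication: for every real parameter φ > 0, every natural number n ≥ 1, and every real y ∈ [0,1], the n-fold Hamacher product of y with itself, defined recursively by y^{(1)} = y and y^{(k+1)} = T_φ(y^{(k)}, y), equals g_{φ,n}(y) = φ·y^n/((1+(φ−1)(1−y))^n + (φ−1)y^n). -/
/-- Hamacher power membership function with parameters `φ` and `ϑ`. -/
noncomputable def hamacherScalarNonMem (φ ϑ y : ℝ) : ℝ :=
  φ * y ^ ϑ / ((1 + (φ - 1) * (1 - y)) ^ ϑ + (φ - 1) * y ^ ϑ)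

/-- If `h k` is the `k`-fold Hamacher product of `y` with itself
(`h 1 = y`, `h (k+1) = T_φ (h k) y`), then `h n = g_{φ,n} y` for all `n ≥ 1`. -/
theorem iterated_hamacherProd_eq_power (φ y : ℝ) (hφ : 0 < φ)
    (hy : y ∈ Set.Icc (0:ℝ) 1) (h : ℕ → ℝ) (h1 : h 1 = y)
    (hrec : ∀ k : ℕ, 1 ≤ k → h (k + 1) = hamacherProd φ (h k) y) :
    ∀ n : ℕ, 1 ≤ n → h n = hamacherScalarNonMem φ (n : ℝ) y := by
  obtain ⟨hy0, hy1⟩ := hy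
  have hApos : 0 < 1 + (φ - 1) * (1 - y) := by
    rcases eq_or_lt_of_le hy0 with h' | h'
    · nlinarith
    · nlinarith [mul_nonneg hφ.le (sub_nonneg.mpr hy1)]
  have hyA : y ≤ 1 + (φ - 1) * (1 - y) := by nlinarith
  have hD : ∀ n : ℕ, 0 < (1 + (φ - 1) * (1 - y)) ^ n + (φ - 1) * y ^ n := by
    intro n
    have hAp := pow_pos hApos n
    rcases le_or_gt 1 φ with h' | h'
    · have : 0 ≤ (φ - 1) * y ^ n := mul_nonneg (by linarith) (pow_nonneg hy0 n)
      linarith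
    · have hle : y ^ n ≤ (1 + (φ - 1) * (1 - y)) ^ n := pow_le_pow_left₀ hy0 hyA n
      nlinarith
  intro n hn
  induction n, hn using Nat.le_induction with
  | base =>
    rw [h1]
    unfold hamacherScalarNonMem
    rw [Nat.cast_one, Real.rpow_one, Real.rpow_one]
    have hden : (1 + (φ - 1) * (1 - y)) + (φ - 1) * y = φ := by ring
    rw [hden]
    field_simp
  | succ k hk ih =>
    rw [hrec k hk, ih]
    unfold hamacherScalarNonMem hamacherProd
    rw [Real.rpow_natCast, Real.rpow_natCast, Real.rpow_natCast, Real.rpow_natCast]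
    have hDk := hD k
    have hDk1 := hD (k + 1)
    push_cast
    set A := 1 + (φ - 1) * (1 - y) with hA
    have key : φ + (1 - φ) * (φ * y ^ k / (A ^ k + (φ - 1) * y ^ k) + y -
        φ * y ^ k / (A ^ k + (φ - 1) * y ^ k) * y)
        = (A ^ (k + 1) + (φ - 1) * y ^ (k + 1)) / (A ^ k + (φ - 1) * y ^ k) := by
      have hne : A ^ k + y ^ k * (φ - 1) ≠ 0 := by rw [mul_comm]; exact hDk.ne'
      field_simp
      rw [hA]
      ring
    rw [key, div_div_eq_mul_div]
    rw [div_eq_div_iff hDk1.ne' hDk1.ne']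
    have hne : A ^ k + y ^ k * (φ - 1) ≠ 0 := by rw [mul_comm]; exact hDk.ne'
    field_simp
    try ring
    try exact Or.inl trivial
end

section
/- The score function of interval valued q-rung orthopair fuzzy numbers is monotone: for real numbers u⁻ ≤ u⁺ and v⁻ ≤ v⁺ in [0,1] and u'⁻ ≤ u'⁺ and v'⁻ ≤ v'⁺ in [0,1] with u⁻ ≤ u'⁻, u⁺ ≤ u'⁺, v⁻ ≥ v'⁻, and v⁺ ≥ v'⁺, the score S(a) = ½(u⁻ − v⁺(1−u⁺) + u⁺ − v⁻(1−u⁻)) satisfies S(u⁻,u⁺,v⁻,v⁺) ≤ S(u'⁻,u'⁺,v'⁻,v'⁺). -/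
/-- Score function of an interval valued q-rung orthopair fuzzy number
`a = ⟨[u⁻,u⁺],[v⁻,v⁺]⟩`. -/
noncomputable def ivqScore (um up vm vp : ℝ) : ℝ :=
  (1 / 2) * (um - vp * (1 - up) + up - vm * (1 - um))

/-! The score is the mean of `u - v (1 - u)` over the endpoint pairs `(u⁻, v⁻)` and `(u⁺, v⁺)`;
writing `u - v (1 - u) = u (1 + v) - v`, this is increasing in `u` for `v ≥ -1` and decreasing
in `v` for `u ≤ 1`. -/

def endpointScore (u v : ℝ) : ℝ :=
  u - v * (1 - u)

theorem ivqScore_eq_endpointScore (um up vm vp : ℝ) :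
    ivqScore um up vm vp = (endpointScore um vm + endpointScore up vp) / 2 := by
  unfold ivqScore endpointScore
  ring

theorem endpointScore_mono_left {v : ℝ} (hv : -1 ≤ v) : Monotone (endpointScore · v) := by
  intro u u' hu
  have : u * (1 + v) ≤ u' * (1 + v) := mul_le_mul_of_nonneg_right hu (by linarith)
  simp only [endpointScore]
  linarith

theorem endpointScore_anti_right {u : ℝ} (hu : u ≤ 1) : Antitone (endpointScore u) := by
  intro v v' hv
  have : v * (1 - u) ≤ v' * (1 - u) := mul_le_mul_of_nonneg_right hv (by linarith)
  simp only [endpointScore]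
  linarith

theorem endpointScore_le_endpointScore {u u' v v' : ℝ} (hv : -1 ≤ v) (hu' : u' ≤ 1)
    (hu : u ≤ u') (hv' : v' ≤ v) : endpointScore u v ≤ endpointScore u' v' :=
  (endpointScore_mono_left hv hu).trans (endpointScore_anti_right hu' hv')

theorem ivqScore_monotone_general (um up vm vp um' up' vm' vp' : ℝ)
    (hvm : 0 ≤ vm) (hvv : vm ≤ vp)
    (huu' : um' ≤ up') (hup' : up' ≤ 1)
    (h1 : um ≤ um') (h2 : up ≤ up') (h3 : vm' ≤ vm) (h4 : vp' ≤ vp) :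
    ivqScore um up vm vp ≤ ivqScore um' up' vm' vp' := by
  rw [ivqScore_eq_endpointScore, ivqScore_eq_endpointScore]
  gcongr
  · exact endpointScore_le_endpointScore (by linarith) (by linarith) h1 h3
  · exact endpointScore_le_endpointScore (by linarith) hup' h2 h4

theorem ivqScore_monotone (um up vm vp um' up' vm' vp' : ℝ)
    (hum : 0 ≤ um) (huu : um ≤ up) (hup : up ≤ 1)
    (hvm : 0 ≤ vm) (hvv : vm ≤ vp) (hvp : vp ≤ 1)
    (hum' : 0 ≤ um') (huu' : um' ≤ up') (hup' : up' ≤ 1)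
    (hvm' : 0 ≤ vm') (hvv' : vm' ≤ vp') (hvp' : vp' ≤ 1)
    (h1 : um ≤ um') (h2 : up ≤ up') (h3 : vm' ≤ vm) (h4 : vp' ≤ vp) :
    ivqScore um up vm vp ≤ ivqScore um' up' vm' vp' :=
  ivqScore_monotone_general um up vm vp um' up' vm' vp' hvm hvv huu' hup' h1 h2 h3 h4
end
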